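/- The first subleading Harer–Zagier coefficient has the closed form b(g, g−2) = (1/5) · 2^{g−2} · (6g−5)!! / (3^{g−2} · (g−2)!) for every integer g ≥ 2, where (6g−5)!! denotes the double factorial. -/

import Mathlib

/-!
On the top diagonal `k = g - 1` the recurrence loses its first term, since `b g g = 0`, and is a
first-order product recurrence, solved by `2^(g-1) (6g-3)‼ / (3^g g!)`. On the next diagonal
`k = g - 2` it is a first-order recurrence whose inhomogeneous term is the top diagonal just
computed, and the claimed closed form is checked to satisfy it by induction on `g`.
-/

open Nat

theorem Nat.doubleFactorial_add_six (n : ℕ) : (n + 6)‼ = (n + 6) * (n + 4) * (n + 2) * n‼ := by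
  simp only [doubleFactorial_add_two, mul_assoc]

def HarerZagierRecurrence (b : ℕ → ℤ → ℚ) : Prop :=
  ∀ g : ℕ, 1 ≤ g → ∀ k : ℤ,
    (4 * (g : ℚ) + 2 * (k : ℚ) + 6) * b (g + 1) k =
      (4 * (g : ℚ) + 2 * (k : ℚ) + 1) * (4 * (g : ℚ) + 2 * (k : ℚ) + 3) *
        ((4 * (g : ℚ) + 2 * (k : ℚ) + 2) * b g k
          + 4 * (4 * (g : ℚ) + 2 * (k : ℚ) - 1) * b g (k - 1))

namespace HarerZagierRecurrence

variable {b : ℕ → ℤ → ℚ}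

theorem top_diagonal_succ (hrec : HarerZagierRecurrence b) (m : ℕ)
    (hzero : b (m + 1) ((m : ℤ) + 1) = 0) :
    b (m + 2) ((m : ℤ) + 1) =
      2 * (6 * m + 5) * (6 * m + 7) * (6 * m + 9) / (3 * (m + 2)) * b (m + 1) m := by
  have h := hrec (m + 1) (by omega) ((m : ℤ) + 1)
  rw [add_sub_cancel_right, hzero] at h
  push_cast at h
  field_simp
  linear_combination h / 2

theorem next_diagonal_succ (hrec : HarerZagierRecurrence b) (m : ℕ) :
    b (m + 3) ((m : ℤ) + 1) =
      (6 * m + 11) * (6 * m + 13) *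
        ((6 * m + 12) * b (m + 2) ((m : ℤ) + 1) + 4 * (6 * m + 9) * b (m + 2) m) /
          (6 * m + 16) := by
  have h := hrec (m + 2) (by omega) ((m : ℤ) + 1)
  rw [add_sub_cancel_right] at h
  push_cast at h
  field_simp
  linear_combination h

theorem top_diagonal (hrec : HarerZagierRecurrence b) (hb1 : b 1 0 = 1)
    (hzero : ∀ m : ℕ, b (m + 1) ((m : ℤ) + 1) = 0) (m : ℕ) :
    b (m + 1) m = 2 ^ m * (6 * m + 3)‼ / (3 ^ (m + 1) * (m + 1)!) := by
  induction m with
  | zero => simpa using hb1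
  | succ m ih =>
    rw [Nat.cast_succ, hrec.top_diagonal_succ m (hzero m), ih,
      show 6 * (m + 1) + 3 = 6 * m + 3 + 6 by ring, doubleFactorial_add_six, factorial_succ (m + 1)]
    push_cast
    field_simp
    ring

theorem next_diagonal (hrec : HarerZagierRecurrence b) (hb1 : b 1 0 = 1) (hneg : b 1 (-1) = 0)
    (hzero : ∀ m : ℕ, b (m + 1) ((m : ℤ) + 1) = 0) (m : ℕ) :
    b (m + 2) m = 2 ^ m * (6 * m + 7)‼ / (5 * 3 ^ m * m !) := by
  induction m with
  | zero =>
    have h := hrec 1 le_rfl 0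
    norm_num [hb1, hneg] at h
    norm_num [doubleFactorial]
    linarith
  | succ m ih =>
    rw [Nat.cast_succ, hrec.next_diagonal_succ m, ih, ← Nat.cast_succ,
      hrec.top_diagonal hb1 hzero (m + 1), show 6 * (m + 1) + 7 = 6 * m + 7 + 6 by ring,
      show 6 * (m + 1) + 3 = 6 * m + 7 + 2 by ring, doubleFactorial_add_six (6 * m + 7),
      doubleFactorial_add_two (6 * m + 7), factorial_succ (m + 1), factorial_succ m]
    push_cast
    field_simp
    ring

end HarerZagierRecurrence

theorem harer_zagier_first_subleading_coefficient
    (b : ℕ → ℤ → ℚ)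
    (hb1 : b 1 0 = 1)
    (hb0 : ∀ g : ℕ, 1 ≤ g → ∀ k : ℤ, (k < 0 ∨ (g : ℤ) - 1 < k) → b g k = 0)
    (hrec : ∀ g : ℕ, 1 ≤ g → ∀ k : ℤ,
      (4 * (g : ℚ) + 2 * (k : ℚ) + 6) * b (g + 1) k =
        (4 * (g : ℚ) + 2 * (k : ℚ) + 1) * (4 * (g : ℚ) + 2 * (k : ℚ) + 3) *
          ((4 * (g : ℚ) + 2 * (k : ℚ) + 2) * b g k
            + 4 * (4 * (g : ℚ) + 2 * (k : ℚ) - 1) * b g (k - 1))) :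
    ∀ g : ℕ, 2 ≤ g →
      b g ((g : ℤ) - 2) =
        (1 / 5 : ℚ) * ((2 ^ (g - 2) * Nat.doubleFactorial (6 * g - 5) : ℕ) : ℚ) /
          ((3 ^ (g - 2) * Nat.factorial (g - 2) : ℕ) : ℚ) := by
  intro g hg
  obtain ⟨m, rfl⟩ : ∃ m, g = m + 2 := ⟨g - 2, by omega⟩
  have hzero : ∀ n : ℕ, b (n + 1) ((n : ℤ) + 1) = 0 := fun n ↦
    hb0 (n + 1) (by omega) _ (Or.inr (by push_cast; omega))
  have hneg : b 1 (-1) = 0 := hb0 1 le_rfl _ (Or.inl (by norm_num))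
  rw [show ((m + 2 : ℕ) : ℤ) - 2 = m by push_cast; ring,
    HarerZagierRecurrence.next_diagonal hrec hb1 hneg hzero m,
    show 6 * (m + 2) - 5 = 6 * m + 7 by omega, add_tsub_cancel_right]
  push_cast
  ring
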